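/- arXiv:2006.14312 — 4 statements merged into one kernel-verified Lean document; each statement's English description precedes it below -/
import Mathlib

section
/- Let |V| = n be even, R ⊆ V with |R| = n/2, and β a real number with n/4 ≤ β ≤ n/2. Then the function f₂(S) = min(|S|, n/2, β + |S ∩ R|, β + |S ∩ (V\R)|) - |S|/2 is nonnegative and submodular. -/
private lemma aux2' {L a b c d : ℝ} (h1 : L ≤ a + c) (h2 : L ≤ a + d)
    (h3 : L ≤ b + c) (h4 : L ≤ b + d) : L ≤ min a b + min c d := by
  rcases min_choice a b with h | h <;> rcases min_choice c d with h' | h' <;>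
    rw [h, h'] <;> assumption

private lemma submod_aux (β h uu ua ub vv va vb xx xa xb yy ya yb : ℝ)
    (huu : ua + ub = uu) (hvv : va + vb = vv) (hxx : xa + xb = xx) (hyy : ya + yb = yy)
    (hca : ua + va = xa + ya) (hcb : ub + vb = xb + yb)
    (hvax : va ≤ xa) (hvay : va ≤ ya) (hvbx : vb ≤ xb) (hvby : vb ≤ yb)
    (hβ : h ≤ 2 * β) :
    min (min uu h) (min (β + ua) (β + ub)) - uu / 2 +
      (min (min vv h) (min (β + va) (β + vb)) - vv / 2) ≤
    min (min xx h) (min (β + xa) (β + xb)) - xx / 2 +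
      (min (min yy h) (min (β + ya) (β + yb)) - yy / 2) := by
  have hU1 : min (min uu h) (min (β + ua) (β + ub)) ≤ uu :=
    le_trans (min_le_left _ _) (min_le_left _ _)
  have hU2 : min (min uu h) (min (β + ua) (β + ub)) ≤ h :=
    le_trans (min_le_left _ _) (min_le_right _ _)
  have hU3 : min (min uu h) (min (β + ua) (β + ub)) ≤ β + ua :=
    le_trans (min_le_right _ _) (min_le_left _ _)
  have hU4 : min (min uu h) (min (β + ua) (β + ub)) ≤ β + ub :=
    le_trans (min_le_right _ _) (min_le_right _ _)
  have hI1 : min (min vv h) (min (β + va) (β + vb)) ≤ vv :=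
    le_trans (min_le_left _ _) (min_le_left _ _)
  have hI2 : min (min vv h) (min (β + va) (β + vb)) ≤ h :=
    le_trans (min_le_left _ _) (min_le_right _ _)
  have hI3 : min (min vv h) (min (β + va) (β + vb)) ≤ β + va :=
    le_trans (min_le_right _ _) (min_le_left _ _)
  have hI4 : min (min vv h) (min (β + va) (β + vb)) ≤ β + vb :=
    le_trans (min_le_right _ _) (min_le_right _ _)
  have key : min (min uu h) (min (β + ua) (β + ub)) +
      min (min vv h) (min (β + va) (β + vb)) ≤
      min (min xx h) (min (β + xa) (β + xb)) +
      min (min yy h) (min (β + ya) (β + yb)) := by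
    apply aux2' <;> apply aux2' <;> linarith
  linarith

theorem stmt3 {V : Type*} [Fintype V] [DecidableEq V]
    (hn : Even (Fintype.card V))
    (R : Finset V) (hR : 2 * R.card = Fintype.card V)
    (β : ℝ) (hβ1 : (Fintype.card V : ℝ) / 4 ≤ β) (hβ2 : β ≤ (Fintype.card V : ℝ) / 2)
    (f₂ : Finset V → ℝ)
    (hf₂ : ∀ S : Finset V, f₂ S =
      min (min (S.card : ℝ) ((Fintype.card V : ℝ) / 2))
          (min (β + ((S ∩ R).card : ℝ)) (β + ((S \ R).card : ℝ))) - (S.card : ℝ) / 2) :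
    (∀ S : Finset V, 0 ≤ f₂ S) ∧
    (∀ X Y : Finset V, f₂ (X ∪ Y) + f₂ (X ∩ Y) ≤ f₂ X + f₂ Y) := by
  have hRc : (R.card : ℝ) = (Fintype.card V : ℝ) / 2 := by
    have : (2 : ℝ) * R.card = (Fintype.card V : ℝ) := by exact_mod_cast hR
    linarith
  have hsplit : ∀ S : Finset V, ((S ∩ R).card : ℝ) + ((S \ R).card : ℝ) = S.card := by
    intro S; exact_mod_cast Finset.card_inter_add_card_sdiff S R
  have hba : ∀ S : Finset V, ((S ∩ R).card : ℝ) ≤ (Fintype.card V : ℝ) / 2 := by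
    intro S
    rw [← hRc]
    exact_mod_cast Finset.card_le_card (Finset.inter_subset_right)
  have hbb : ∀ S : Finset V, ((S \ R).card : ℝ) ≤ (Fintype.card V : ℝ) / 2 := by
    intro S
    have h2 : (S \ R).card ≤ (Finset.univ \ R).card :=
      Finset.card_le_card (Finset.sdiff_subset_sdiff (Finset.subset_univ S) le_rfl)
    have h3 : (Finset.univ \ R).card = Fintype.card V - R.card := by
      rw [Finset.card_sdiff_of_subset (Finset.subset_univ R), Finset.card_univ]
    have h5 : R.card ≤ Fintype.card V := Finset.card_le_univ R
    have h4 : (S \ R).card + R.card ≤ Fintype.card V := by omega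
    have h6 : ((S \ R).card : ℝ) + (R.card : ℝ) ≤ (Fintype.card V : ℝ) := by exact_mod_cast h4
    linarith
  constructor
  · intro S
    rw [hf₂ S, sub_nonneg]
    simp only [le_min_iff]
    have hs := hsplit S
    have h1 := hba S
    have h2 := hbb S
    have h0 : (0:ℝ) ≤ ((S ∩ R).card : ℝ) := Nat.cast_nonneg _
    have h0' : (0:ℝ) ≤ ((S \ R).card : ℝ) := Nat.cast_nonneg _
    refine ⟨⟨by linarith, by linarith⟩, by linarith, by linarith⟩
  · intro X Y
    rw [hf₂ (X ∪ Y), hf₂ (X ∩ Y), hf₂ X, hf₂ Y]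
    apply submod_aux
    · exact hsplit (X ∪ Y)
    · exact hsplit (X ∩ Y)
    · exact hsplit X
    · exact hsplit Y
    · have e1 : (X ∪ Y) ∩ R = (X ∩ R) ∪ (Y ∩ R) := Finset.union_inter_distrib_right X Y R
      have e2 : (X ∩ Y) ∩ R = (X ∩ R) ∩ (Y ∩ R) := by
        ext x; simp only [Finset.mem_inter]; tauto
      rw [e1, e2]
      exact_mod_cast Finset.card_union_add_card_inter (X ∩ R) (Y ∩ R)
    · have e1 : (X ∪ Y) \ R = (X \ R) ∪ (Y \ R) := Finset.union_sdiff_distrib X Y R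
      have e2 : (X ∩ Y) \ R = (X \ R) ∩ (Y \ R) := by
        ext x; simp only [Finset.mem_inter, Finset.mem_sdiff]; tauto
      rw [e1, e2]
      exact_mod_cast Finset.card_union_add_card_inter (X \ R) (Y \ R)
    · exact_mod_cast Finset.card_le_card (by intro x hx; simp only [Finset.mem_inter] at hx ⊢; tauto)
    · exact_mod_cast Finset.card_le_card (by intro x hx; simp only [Finset.mem_inter] at hx ⊢; tauto)
    · exact_mod_cast Finset.card_le_card (by intro x hx; simp only [Finset.mem_inter, Finset.mem_sdiff] at hx ⊢; tauto)
    · exact_mod_cast Finset.card_le_card (by intro x hx; simp only [Finset.mem_inter, Finset.mem_sdiff] at hx ⊢; tauto)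
    · linarith
end

section
/- Let |V| = n be even, R ⊆ V with |R| = n/2, and β with n/4 ≤ β ≤ n/2. The function f₄(S) = min(|S|, n/2, β + |S ∩ R|, β + |S \ R|) is nonnegative, monotone, and submodular. -/
private lemma min4_cases (a b c d : ℝ) :
    min (min a b) (min c d) = a ∨ min (min a b) (min c d) = b ∨
    min (min a b) (min c d) = c ∨ min (min a b) (min c d) = d := by
  rcases min_cases a b with ⟨h1, _⟩ | ⟨h1, _⟩ <;>
  rcases min_cases c d with ⟨h2, _⟩ | ⟨h2, _⟩ <;>
  rcases min_cases (min a b) (min c d) with ⟨h3, _⟩ | ⟨h3, _⟩ <;>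
  simp_all

theorem stmt8 {V : Type*} [Fintype V] [DecidableEq V]
    (hn : Even (Fintype.card V))
    (R : Finset V) (hR : 2 * R.card = Fintype.card V)
    (β : ℝ) (hβ1 : (Fintype.card V : ℝ) / 4 ≤ β) (hβ2 : β ≤ (Fintype.card V : ℝ) / 2)
    (f₄ : Finset V → ℝ)
    (hf₄ : ∀ S : Finset V, f₄ S =
      min (min (S.card : ℝ) ((Fintype.card V : ℝ) / 2))
          (min (β + ((S ∩ R).card : ℝ)) (β + ((S \ R).card : ℝ)))) :
    (∀ S : Finset V, 0 ≤ f₄ S) ∧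
    (∀ A B : Finset V, A ⊆ B → f₄ A ≤ f₄ B) ∧
    (∀ X Y : Finset V, f₄ (X ∪ Y) + f₄ (X ∩ Y) ≤ f₄ X + f₄ Y) := by
  have hβ0 : 0 ≤ β := le_trans (by positivity) hβ1
  have hn0 : (0:ℝ) ≤ (Fintype.card V : ℝ) / 2 := by positivity
  refine ⟨?_, ?_, ?_⟩
  · intro S
    rw [hf₄]
    refine le_min (le_min (by positivity) hn0) (le_min (by positivity) (by positivity))
  · intro A B hAB
    rw [hf₄, hf₄]
    have h1 : (A.card : ℝ) ≤ B.card := by exact_mod_cast Finset.card_le_card hAB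
    have h2 : ((A ∩ R).card : ℝ) ≤ (B ∩ R).card := by
      exact_mod_cast Finset.card_le_card (Finset.inter_subset_inter hAB Finset.Subset.rfl)
    have h3 : ((A \ R).card : ℝ) ≤ (B \ R).card := by
      exact_mod_cast Finset.card_le_card (Finset.sdiff_subset_sdiff hAB Finset.Subset.rfl)
    exact min_le_min (min_le_min h1 le_rfl)
      (min_le_min (by linarith) (by linarith))
  · intro X Y
    set U := X ∪ Y with hU
    set I := X ∩ Y with hI
    -- bounds on f₄ U and f₄ I
    have hU1 : f₄ U ≤ (U.card : ℝ) := by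
      rw [hf₄]; exact le_trans (min_le_left _ _) (min_le_left _ _)
    have hU2 : f₄ U ≤ (Fintype.card V : ℝ) / 2 := by
      rw [hf₄]; exact le_trans (min_le_left _ _) (min_le_right _ _)
    have hU3 : f₄ U ≤ β + ((U ∩ R).card : ℝ) := by
      rw [hf₄]; exact le_trans (min_le_right _ _) (min_le_left _ _)
    have hU4 : f₄ U ≤ β + ((U \ R).card : ℝ) := by
      rw [hf₄]; exact le_trans (min_le_right _ _) (min_le_right _ _)
    have hI1 : f₄ I ≤ (I.card : ℝ) := by
      rw [hf₄]; exact le_trans (min_le_left _ _) (min_le_left _ _)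
    have hI2 : f₄ I ≤ (Fintype.card V : ℝ) / 2 := by
      rw [hf₄]; exact le_trans (min_le_left _ _) (min_le_right _ _)
    have hI3 : f₄ I ≤ β + ((I ∩ R).card : ℝ) := by
      rw [hf₄]; exact le_trans (min_le_right _ _) (min_le_left _ _)
    have hI4 : f₄ I ≤ β + ((I \ R).card : ℝ) := by
      rw [hf₄]; exact le_trans (min_le_right _ _) (min_le_right _ _)
    -- modularity identities
    have hc1 : (U.card : ℝ) + I.card = X.card + Y.card := by
      exact_mod_cast congrArg (Nat.cast (R := ℝ)) (Finset.card_union_add_card_inter X Y)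
    have hUR : U ∩ R = (X ∩ R) ∪ (Y ∩ R) := by
      rw [hU]; ext x; simp [Finset.mem_inter, Finset.mem_union] <;> tauto
    have hIR : I ∩ R = (X ∩ R) ∩ (Y ∩ R) := by
      rw [hI]; ext x; simp [Finset.mem_inter] <;> tauto
    have hUS : U \ R = (X \ R) ∪ (Y \ R) := by
      rw [hU]; ext x; simp [Finset.mem_sdiff, Finset.mem_union] <;> tauto
    have hIS : I \ R = (X \ R) ∩ (Y \ R) := by
      rw [hI]; ext x; simp [Finset.mem_sdiff, Finset.mem_inter] <;> tauto
    have hc3 : ((U ∩ R).card : ℝ) + (I ∩ R).card = (X ∩ R).card + (Y ∩ R).card := by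
      rw [hUR, hIR]
      exact_mod_cast congrArg (Nat.cast (R := ℝ))
        (Finset.card_union_add_card_inter (X ∩ R) (Y ∩ R))
    have hc4 : ((U \ R).card : ℝ) + (I \ R).card = (X \ R).card + (Y \ R).card := by
      rw [hUS, hIS]
      exact_mod_cast congrArg (Nat.cast (R := ℝ))
        (Finset.card_union_add_card_inter (X \ R) (Y \ R))
    -- splitting identities
    have hXsplit : (X.card : ℝ) = (X ∩ R).card + (X \ R).card := by
      exact_mod_cast (congrArg (Nat.cast (R := ℝ)) (Finset.card_inter_add_card_sdiff X R)).symm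
    have hYsplit : (Y.card : ℝ) = (Y ∩ R).card + (Y \ R).card := by
      exact_mod_cast (congrArg (Nat.cast (R := ℝ)) (Finset.card_inter_add_card_sdiff Y R)).symm
    have hIsplit : (I.card : ℝ) = (I ∩ R).card + (I \ R).card := by
      exact_mod_cast (congrArg (Nat.cast (R := ℝ)) (Finset.card_inter_add_card_sdiff I R)).symm
    -- subset inequalities
    have hIX : (I.card : ℝ) ≤ X.card := by
      exact_mod_cast Finset.card_le_card (Finset.inter_subset_left)
    have hIY : (I.card : ℝ) ≤ Y.card := by
      exact_mod_cast Finset.card_le_card (Finset.inter_subset_right)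
    have hIRX : ((I ∩ R).card : ℝ) ≤ (X ∩ R).card := by
      exact_mod_cast Finset.card_le_card
        (Finset.inter_subset_inter Finset.inter_subset_left Finset.Subset.rfl)
    have hIRY : ((I ∩ R).card : ℝ) ≤ (Y ∩ R).card := by
      exact_mod_cast Finset.card_le_card
        (Finset.inter_subset_inter Finset.inter_subset_right Finset.Subset.rfl)
    have hISX : ((I \ R).card : ℝ) ≤ (X \ R).card := by
      exact_mod_cast Finset.card_le_card
        (Finset.sdiff_subset_sdiff Finset.inter_subset_left Finset.Subset.rfl)
    have hISY : ((I \ R).card : ℝ) ≤ (Y \ R).card := by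
      exact_mod_cast Finset.card_le_card
        (Finset.sdiff_subset_sdiff Finset.inter_subset_right Finset.Subset.rfl)
    have hβn : (Fintype.card V : ℝ) / 2 ≤ 2 * β := by linarith
    rcases min4_cases (X.card : ℝ) ((Fintype.card V : ℝ) / 2)
      (β + ((X ∩ R).card : ℝ)) (β + ((X \ R).card : ℝ)) with hX | hX | hX | hX <;>
    rcases min4_cases (Y.card : ℝ) ((Fintype.card V : ℝ) / 2)
      (β + ((Y ∩ R).card : ℝ)) (β + ((Y \ R).card : ℝ)) with hY | hY | hY | hY <;>
    rw [hf₄ X, hf₄ Y, hX, hY] <;> linarith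
end

section
/- Let f : 2^V → ℝ be nonnegative, monotone, and submodular, let U = {u_1, ..., u_k} ⊆ V be k distinct elements, and let S_1, ..., S_k ⊆ V be pairwise disjoint sets. Define S'_i = (S_i \ U) ∪ {u_i}. Then the S'_i are nonempty and pairwise disjoint, and ∑_{i=1}^k f(S'_i) ≤ ∑_{i=1}^k f(S_i) + ∑_{i=1}^k f({u_i}). -/
theorem stmt12 {V : Type*} [Fintype V] [DecidableEq V] (k : ℕ)
    (f : Finset V → ℝ)
    (hnn : ∀ X : Finset V, 0 ≤ f X)
    (hmono : ∀ A B : Finset V, A ⊆ B → f A ≤ f B)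
    (hsub : ∀ X Y : Finset V, f (X ∪ Y) + f (X ∩ Y) ≤ f X + f Y)
    (u : Fin k → V) (hu : Function.Injective u)
    (S : Fin k → Finset V)
    (hdisj : ∀ i j, i ≠ j → Disjoint (S i) (S j)) :
    (∀ i, ((S i \ Finset.univ.image u) ∪ {u i}).Nonempty) ∧
    (∀ i j, i ≠ j →
      Disjoint ((S i \ Finset.univ.image u) ∪ {u i})
        ((S j \ Finset.univ.image u) ∪ {u j})) ∧
    ∑ i, f ((S i \ Finset.univ.image u) ∪ {u i}) ≤
      ∑ i, f (S i) + ∑ i, f {u i} := by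
  refine ⟨fun i => ⟨u i, by simp⟩, ?_, ?_⟩
  · intro i j hij
    rw [Finset.disjoint_union_left, Finset.disjoint_union_right,
      Finset.disjoint_union_right]
    refine ⟨⟨(hdisj i j hij).mono (Finset.sdiff_subset) (Finset.sdiff_subset), ?_⟩,
      ⟨?_, ?_⟩⟩
    · simp only [Finset.disjoint_singleton_right, Finset.mem_sdiff, not_and]
      intro _
      simp
    · simp only [Finset.disjoint_singleton_left, Finset.mem_sdiff, not_and]
      intro _
      simp
    · simp only [Finset.disjoint_singleton_right, Finset.mem_singleton]
      exact fun h => hij (hu h.symm)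
  · rw [← Finset.sum_add_distrib]
    apply Finset.sum_le_sum
    intro i _
    have h1 := hsub (S i \ Finset.univ.image u) {u i}
    have h2 : 0 ≤ f ((S i \ Finset.univ.image u) ∩ {u i}) := hnn _
    have h3 : f (S i \ Finset.univ.image u) ≤ f (S i) :=
      hmono _ _ Finset.sdiff_subset
    linarith
end

section
/- Let V be finite, |V| = n even, and k = n/2 + 1. Let OPT₃ be the minimum of ∑_{i=1}^k f₃(S_i) over partitions of V into k nonempty disjoint sets with f₃(S) = min(|S|, n/2), and OPT₄ the analogous minimum for f₄(S) = min(|S|, n/2, β + |S∩R|, β + |S\R|) where |R| = n/2 and n/4 ≤ β ≤ n/2. Then OPT₃ = n and OPT₄ ≤ β + n/2, so OPT₃/OPT₄ ≥ n/(β + n/2). -/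
theorem stmt18 {V : Type*} [Fintype V] [DecidableEq V]
    (hn : Even (Fintype.card V))
    (R : Finset V) (hR : 2 * R.card = Fintype.card V)
    (β : ℝ) (hβ1 : (Fintype.card V : ℝ) / 4 ≤ β) (hβ2 : β ≤ (Fintype.card V : ℝ) / 2) :
    (sInf {x : ℝ | ∃ S : Fin (Fintype.card V / 2 + 1) → Finset V,
        (∀ i, (S i).Nonempty) ∧ (∀ i j, i ≠ j → Disjoint (S i) (S j)) ∧
        Finset.univ.biUnion S = Finset.univ ∧
        ∑ i, min ((S i).card : ℝ) ((Fintype.card V : ℝ) / 2) = x}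
      = (Fintype.card V : ℝ)) ∧
    (sInf {x : ℝ | ∃ S : Fin (Fintype.card V / 2 + 1) → Finset V,
        (∀ i, (S i).Nonempty) ∧ (∀ i j, i ≠ j → Disjoint (S i) (S j)) ∧
        Finset.univ.biUnion S = Finset.univ ∧
        ∑ i, min (min ((S i).card : ℝ) ((Fintype.card V : ℝ) / 2))
          (min (β + (((S i) ∩ R).card : ℝ)) (β + (((S i) \ R).card : ℝ))) = x}
      ≤ β + (Fintype.card V : ℝ) / 2) ∧
    (sInf {x : ℝ | ∃ S : Fin (Fintype.card V / 2 + 1) → Finset V,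
        (∀ i, (S i).Nonempty) ∧ (∀ i j, i ≠ j → Disjoint (S i) (S j)) ∧
        Finset.univ.biUnion S = Finset.univ ∧
        ∑ i, min ((S i).card : ℝ) ((Fintype.card V : ℝ) / 2) = x} /
     sInf {x : ℝ | ∃ S : Fin (Fintype.card V / 2 + 1) → Finset V,
        (∀ i, (S i).Nonempty) ∧ (∀ i j, i ≠ j → Disjoint (S i) (S j)) ∧
        Finset.univ.biUnion S = Finset.univ ∧
        ∑ i, min (min ((S i).card : ℝ) ((Fintype.card V : ℝ) / 2))
          (min (β + (((S i) ∩ R).card : ℝ)) (β + (((S i) \ R).card : ℝ))) = x}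
      ≥ (Fintype.card V : ℝ) / (β + (Fintype.card V : ℝ) / 2)) := by
  rcases Nat.eq_zero_or_pos (Fintype.card V) with h0 | hpos
  · -- degenerate case: V is empty
    have hVempty : IsEmpty V := Fintype.card_eq_zero_iff.mp h0
    have h3 : {x : ℝ | ∃ S : Fin (Fintype.card V / 2 + 1) → Finset V,
        (∀ i, (S i).Nonempty) ∧ (∀ i j, i ≠ j → Disjoint (S i) (S j)) ∧
        Finset.univ.biUnion S = Finset.univ ∧
        ∑ i, min ((S i).card : ℝ) ((Fintype.card V : ℝ) / 2) = x} = (∅ : Set ℝ) := by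
      ext x
      simp only [Set.mem_setOf_eq, Set.mem_empty_iff_false, iff_false]
      rintro ⟨S, hne, -⟩
      obtain ⟨v, -⟩ := hne 0
      exact hVempty.false v
    have h4 : {x : ℝ | ∃ S : Fin (Fintype.card V / 2 + 1) → Finset V,
        (∀ i, (S i).Nonempty) ∧ (∀ i j, i ≠ j → Disjoint (S i) (S j)) ∧
        Finset.univ.biUnion S = Finset.univ ∧
        ∑ i, min (min ((S i).card : ℝ) ((Fintype.card V : ℝ) / 2))
          (min (β + (((S i) ∩ R).card : ℝ)) (β + (((S i) \ R).card : ℝ))) = x} = (∅ : Set ℝ) := by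
      ext x
      simp only [Set.mem_setOf_eq, Set.mem_empty_iff_false, iff_false]
      rintro ⟨S, hne, -⟩
      obtain ⟨v, -⟩ := hne 0
      exact hVempty.false v
    have hc0 : (Fintype.card V : ℝ) = 0 := by exact_mod_cast h0
    rw [h3, h4, Real.sInf_empty, hc0]
    norm_num
    linarith
  · -- main case
    set m := Fintype.card V / 2 with hm_def
    have hm2 : 2 * m = Fintype.card V := by
      obtain ⟨r, hr⟩ := hn
      omega
    have hRm : R.card = m := by omega
    have hm1 : 1 ≤ m := by omega
    have hcompl : Rᶜ.card = m := by
      rw [Finset.card_compl]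
      omega
    have hmR : (m : ℝ) = (Fintype.card V : ℝ) / 2 := by
      have h : (m : ℝ) * 2 = (Fintype.card V : ℝ) := by
        exact_mod_cast (by omega : m * 2 = Fintype.card V)
      linarith
    have hN2 : (2 : ℝ) ≤ (Fintype.card V : ℝ) := by
      have : 2 ≤ Fintype.card V := by omega
      exact_mod_cast this
    have hβ0 : (0:ℝ) < β := by linarith
    set e : Fin m ≃ {x // x ∈ Rᶜ} := (finCongr hcompl.symm).trans Rᶜ.equivFin.symm with he
    set c : Fin m → V := fun j => (e j : V) with hc
    have hc_mem : ∀ j, c j ∉ R := fun j => Finset.mem_compl.mp (e j).2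
    have hc_inj : Function.Injective c := fun a b h => e.injective (Subtype.ext h)
    have hc_surj : ∀ v ∈ Rᶜ, ∃ j, c j = v := by
      intro v hv
      obtain ⟨j, hj⟩ := e.surjective ⟨v, hv⟩
      exact ⟨j, congrArg Subtype.val hj⟩
    set S : Fin (m + 1) → Finset V := fun i => Fin.cases R (fun j => ({c j} : Finset V)) i with hS
    have hS0 : S 0 = R := rfl
    have hSsucc : ∀ j : Fin m, S j.succ = {c j} := fun j => rfl
    have hRne : R.Nonempty := Finset.card_pos.mp (by omega)
    have hne : ∀ i, (S i).Nonempty := by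
      intro i
      induction i using Fin.cases with
      | zero => exact hRne
      | succ j => exact ⟨c j, by rw [hSsucc]; exact Finset.mem_singleton_self _⟩
    have hdisj : ∀ i j, i ≠ j → Disjoint (S i) (S j) := by
      intro i j
      induction i using Fin.cases with
      | zero =>
        induction j using Fin.cases with
        | zero => intro h; exact absurd rfl h
        | succ b =>
          intro _
          rw [hS0, hSsucc, Finset.disjoint_singleton_right]
          exact hc_mem b
      | succ a =>
        induction j using Fin.cases with
        | zero =>
          intro _
          rw [hS0, hSsucc, Finset.disjoint_singleton_left]
          exact hc_mem a
        | succ b =>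
          intro h
          rw [hSsucc, hSsucc, Finset.disjoint_singleton]
          intro hab
          exact h (by rw [hc_inj hab])
    have hunion : Finset.univ.biUnion S = Finset.univ := by
      apply Finset.eq_univ_of_forall
      intro v
      rw [Finset.mem_biUnion]
      by_cases hv : v ∈ R
      · exact ⟨0, Finset.mem_univ _, by rw [hS0]; exact hv⟩
      · obtain ⟨j, hj⟩ := hc_surj v (Finset.mem_compl.mpr hv)
        exact ⟨j.succ, Finset.mem_univ _, by rw [hSsucc, hj]; exact Finset.mem_singleton_self _⟩
    -- Part 1: OPT3 = n
    have hsum3 : ∑ i, min ((S i).card : ℝ) ((Fintype.card V : ℝ) / 2)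
        = (Fintype.card V : ℝ) := by
      rw [Fin.sum_univ_succ]
      have h0t : min ((S 0).card : ℝ) ((Fintype.card V : ℝ) / 2) = (Fintype.card V : ℝ) / 2 := by
        rw [hS0, hRm, hmR, min_self]
      have hst : ∀ j : Fin m, min ((S j.succ).card : ℝ) ((Fintype.card V : ℝ) / 2) = 1 := by
        intro j
        rw [hSsucc, Finset.card_singleton]
        norm_num
        linarith
      rw [h0t, Finset.sum_congr rfl (fun j _ => hst j), Finset.sum_const, Finset.card_univ,
        Fintype.card_fin, nsmul_eq_mul, mul_one]
      linarith
    have m3 : (Fintype.card V : ℝ) ∈ {x : ℝ | ∃ S : Fin (m + 1) → Finset V,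
        (∀ i, (S i).Nonempty) ∧ (∀ i j, i ≠ j → Disjoint (S i) (S j)) ∧
        Finset.univ.biUnion S = Finset.univ ∧
        ∑ i, min ((S i).card : ℝ) ((Fintype.card V : ℝ) / 2) = x} :=
      ⟨S, hne, hdisj, hunion, hsum3⟩
    have hlb3 : ∀ x ∈ {x : ℝ | ∃ S : Fin (m + 1) → Finset V,
        (∀ i, (S i).Nonempty) ∧ (∀ i j, i ≠ j → Disjoint (S i) (S j)) ∧
        Finset.univ.biUnion S = Finset.univ ∧
        ∑ i, min ((S i).card : ℝ) ((Fintype.card V : ℝ) / 2) = x},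
        (Fintype.card V : ℝ) ≤ x := by
      rintro x ⟨T, hTne, hTdisj, hTun, rfl⟩
      have hcards : ∑ i, (T i).card = Fintype.card V := by
        rw [← Finset.card_univ (α := V), ← hTun,
          Finset.card_biUnion (fun a _ b _ h => hTdisj a b h)]
      have hle : ∀ i, (T i).card + m ≤ Fintype.card V := by
        intro i
        have h1 : (Finset.univ.erase i).card • 1 ≤ ∑ j ∈ Finset.univ.erase i, (T j).card :=
          Finset.card_nsmul_le_sum _ _ _ (fun j _ => Finset.card_pos.mpr (hTne j))
        have h2 : (T i).card + ∑ j ∈ Finset.univ.erase i, (T j).card = ∑ j, (T j).card :=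
          Finset.add_sum_erase _ (fun j => (T j).card) (Finset.mem_univ i)
        have h3 : (Finset.univ.erase i).card = m := by
          rw [Finset.card_erase_of_mem (Finset.mem_univ i), Finset.card_univ, Fintype.card_fin]
          omega
        simp only [smul_eq_mul, mul_one, h3] at h1
        omega
      have hmin : ∀ i, min ((T i).card : ℝ) ((Fintype.card V : ℝ) / 2) = ((T i).card : ℝ) := by
        intro i
        apply min_eq_left
        have h := hle i
        have h' : ((T i).card : ℝ) + (m : ℝ) ≤ (Fintype.card V : ℝ) := by exact_mod_cast h
        linarith
      rw [Finset.sum_congr rfl (fun i _ => hmin i)]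
      rw [← Nat.cast_sum, hcards]
    have hOPT3 : sInf {x : ℝ | ∃ S : Fin (m + 1) → Finset V,
        (∀ i, (S i).Nonempty) ∧ (∀ i j, i ≠ j → Disjoint (S i) (S j)) ∧
        Finset.univ.biUnion S = Finset.univ ∧
        ∑ i, min ((S i).card : ℝ) ((Fintype.card V : ℝ) / 2) = x} = (Fintype.card V : ℝ) :=
      le_antisymm (csInf_le ⟨_, hlb3⟩ m3) (le_csInf ⟨_, m3⟩ hlb3)
    -- Part 2: OPT4 ≤ β + n/2
    have hsum4 : ∑ i, min (min ((S i).card : ℝ) ((Fintype.card V : ℝ) / 2))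
          (min (β + (((S i) ∩ R).card : ℝ)) (β + (((S i) \ R).card : ℝ)))
        = β + m * min 1 β := by
      rw [Fin.sum_univ_succ]
      have h0t : min (min ((S 0).card : ℝ) ((Fintype.card V : ℝ) / 2))
          (min (β + (((S 0) ∩ R).card : ℝ)) (β + (((S 0) \ R).card : ℝ))) = β := by
        rw [hS0, Finset.inter_self, Finset.sdiff_self, Finset.card_empty, hRm, hmR, min_self]
        push_cast
        have h2 : min (β + (Fintype.card V : ℝ)/2) (β + 0) = β + 0 :=
          min_eq_right (by linarith)
        rw [h2, add_zero, min_eq_right hβ2]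
      have hst : ∀ j : Fin m, min (min ((S j.succ).card : ℝ) ((Fintype.card V : ℝ) / 2))
          (min (β + (((S j.succ) ∩ R).card : ℝ)) (β + (((S j.succ) \ R).card : ℝ)))
          = min 1 β := by
        intro j
        rw [hSsucc]
        have hi : ({c j} : Finset V) ∩ R = ∅ := by
          rw [Finset.singleton_inter_of_notMem (hc_mem j)]
        have hd : ({c j} : Finset V) \ R = {c j} := by
          rw [Finset.sdiff_eq_self_iff_disjoint.mpr (Finset.disjoint_singleton_left.mpr (hc_mem j))]
        rw [hi, hd, Finset.card_singleton, Finset.card_empty]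
        push_cast
        have h1 : min (1:ℝ) ((Fintype.card V : ℝ)/2) = 1 := min_eq_left (by linarith)
        have h2 : min (β + (0:ℝ)) (β + 1) = β + 0 := min_eq_left (by linarith)
        rw [h1, h2, add_zero]
      rw [h0t, Finset.sum_congr rfl (fun j _ => hst j), Finset.sum_const, Finset.card_univ,
        Fintype.card_fin, nsmul_eq_mul]
    have m4 : (β + m * min 1 β) ∈ {x : ℝ | ∃ S : Fin (m + 1) → Finset V,
        (∀ i, (S i).Nonempty) ∧ (∀ i j, i ≠ j → Disjoint (S i) (S j)) ∧
        Finset.univ.biUnion S = Finset.univ ∧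
        ∑ i, min (min ((S i).card : ℝ) ((Fintype.card V : ℝ) / 2))
          (min (β + (((S i) ∩ R).card : ℝ)) (β + (((S i) \ R).card : ℝ))) = x} :=
      ⟨S, hne, hdisj, hunion, hsum4⟩
    have hlb4 : ∀ x ∈ {x : ℝ | ∃ S : Fin (m + 1) → Finset V,
        (∀ i, (S i).Nonempty) ∧ (∀ i j, i ≠ j → Disjoint (S i) (S j)) ∧
        Finset.univ.biUnion S = Finset.univ ∧
        ∑ i, min (min ((S i).card : ℝ) ((Fintype.card V : ℝ) / 2))
          (min (β + (((S i) ∩ R).card : ℝ)) (β + (((S i) \ R).card : ℝ))) = x},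
        min 1 β ≤ x := by
      rintro x ⟨T, hTne, -, -, rfl⟩
      have hnonneg : ∀ i ∈ (Finset.univ : Finset (Fin (m+1))),
          0 ≤ min (min ((T i).card : ℝ) ((Fintype.card V : ℝ) / 2))
            (min (β + (((T i) ∩ R).card : ℝ)) (β + (((T i) \ R).card : ℝ))) := by
        intro i _
        refine le_min (le_min (Nat.cast_nonneg _) (by linarith)) ?_
        exact le_min (add_nonneg hβ0.le (Nat.cast_nonneg _))
          (add_nonneg hβ0.le (Nat.cast_nonneg _))
      have h0t : min 1 β ≤ min (min ((T 0).card : ℝ) ((Fintype.card V : ℝ) / 2))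
          (min (β + (((T 0) ∩ R).card : ℝ)) (β + (((T 0) \ R).card : ℝ))) := by
        have hc1 : (1:ℝ) ≤ ((T 0).card : ℝ) := by
          exact_mod_cast Finset.card_pos.mpr (hTne 0)
        refine le_min (le_min ?_ ?_) (le_min ?_ ?_)
        · exact le_trans (min_le_left _ _) hc1
        · exact le_trans (min_le_left _ _) (by linarith)
        · exact le_trans (min_le_right _ _) (le_add_of_nonneg_right (Nat.cast_nonneg _))
        · exact le_trans (min_le_right _ _) (le_add_of_nonneg_right (Nat.cast_nonneg _))
      exact le_trans h0t (Finset.single_le_sum hnonneg (Finset.mem_univ 0))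
    have hOPT4 : sInf {x : ℝ | ∃ S : Fin (m + 1) → Finset V,
        (∀ i, (S i).Nonempty) ∧ (∀ i j, i ≠ j → Disjoint (S i) (S j)) ∧
        Finset.univ.biUnion S = Finset.univ ∧
        ∑ i, min (min ((S i).card : ℝ) ((Fintype.card V : ℝ) / 2))
          (min (β + (((S i) ∩ R).card : ℝ)) (β + (((S i) \ R).card : ℝ))) = x}
        ≤ β + (Fintype.card V : ℝ) / 2 := by
      refine le_trans (csInf_le ⟨_, hlb4⟩ m4) ?_
      have : (m : ℝ) * min 1 β ≤ (m : ℝ) * 1 := by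
        apply mul_le_mul_of_nonneg_left (min_le_left _ _) (Nat.cast_nonneg _)
      rw [mul_one] at this
      linarith
    have hpos4 : 0 < sInf {x : ℝ | ∃ S : Fin (m + 1) → Finset V,
        (∀ i, (S i).Nonempty) ∧ (∀ i j, i ≠ j → Disjoint (S i) (S j)) ∧
        Finset.univ.biUnion S = Finset.univ ∧
        ∑ i, min (min ((S i).card : ℝ) ((Fintype.card V : ℝ) / 2))
          (min (β + (((S i) ∩ R).card : ℝ)) (β + (((S i) \ R).card : ℝ))) = x} := by
      refine lt_of_lt_of_le (lt_min one_pos hβ0) (le_csInf ⟨_, m4⟩ hlb4)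
    refine ⟨hOPT3, hOPT4, ?_⟩
    rw [hOPT3]
    rw [ge_iff_le]
    apply div_le_div_of_nonneg_left (Nat.cast_nonneg _) hpos4 hOPT4
end
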